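/- Suppose X, Y are complex numbers with Z := max(|X|, |Y|) > 0, that ∏_{j=1}^n |β_j| ≤ c_0 · Z^k, and that i is an index (1 ≤ i ≤ n) with |β_i| = min_{1≤j≤n} |β_j|. Then for every j ≠ i (1 ≤ j ≤ n) one has |β_j| ≥ c_{1ij} Z − c_{2ij} Z^{k/n} − c_{3ij}. -/

import Mathlib

open Finset

/-!
Eliminating `X`, resp. `Y`, between `βᵢ` and `βⱼ` gives
`(αᵢ - αⱼ) Y = βⱼ - βᵢ - (λⱼ - λᵢ)` and `(αᵢ - αⱼ) X = αᵢ βⱼ - αⱼ βᵢ - (αᵢ λⱼ - αⱼ λᵢ)`,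
so `c₁ᵢⱼ Z ≤ |βⱼ| + max(1, |αⱼ|/|αᵢ|) |βᵢ| + c₃ᵢⱼ`. Since `βᵢ` is the smallest factor,
`|βᵢ|ⁿ ≤ ∏ |βⱼ| ≤ c₀ Zᵏ`, i.e. `|βᵢ| ≤ c₀^(1/n) Z^(k/n)`.
-/

lemma Finset.inf'_pow_card_le_prod {ι : Type*} (s : Finset ι) (hs : s.Nonempty) (f : ι → ℝ)
    (hf : ∀ i ∈ s, 0 ≤ f i) : s.inf' hs f ^ s.card ≤ ∏ i ∈ s, f i := by
  rw [← prod_const]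
  exact prod_le_prod (fun _ _ => le_inf' hs f hf) fun _ hi => inf'_le f hi

lemma le_rpow_mul_rpow_of_pow_le_mul_pow {b c z : ℝ} {n k : ℕ} (hb : 0 ≤ b) (hc : 0 ≤ c)
    (hz : 0 ≤ z) (hn : n ≠ 0) (h : b ^ n ≤ c * z ^ k) :
    b ≤ c ^ ((1 : ℝ) / n) * z ^ ((k : ℝ) / n) := by
  calc b = (b ^ n) ^ ((1 : ℝ) / n) := by rw [one_div, Real.pow_rpow_inv_natCast hb hn]
    _ ≤ (c * z ^ k) ^ ((1 : ℝ) / n) := by gcongr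
    _ = c ^ ((1 : ℝ) / n) * z ^ ((k : ℝ) / n) := by
      rw [Real.mul_rpow hc (by positivity), ← Real.rpow_natCast z k, ← Real.rpow_mul hz,
        mul_one_div]

lemma norm_sub_add_le {E : Type*} [SeminormedAddCommGroup E] (u v w : E) :
    ‖u - v + w‖ ≤ ‖u‖ + ‖v‖ + ‖w‖ :=
  (norm_add_le _ _).trans (add_le_add_left (norm_sub_le u v) _)

section Elimination

variable {𝕜 : Type*} [NormedField 𝕜] (X Y a b l l' : 𝕜)

lemma norm_sub_mul_norm_le_of_eliminate_Y :
    ‖b - a‖ * ‖X‖ ≤ ‖a‖ * ‖X - b * Y + l'‖ + ‖b‖ * ‖X - a * Y + l‖ + ‖a * l' - b * l‖ := by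
  have hX : (b - a) * X = b * (X - a * Y + l) - a * (X - b * Y + l') + (a * l' - b * l) := by
    ring
  calc ‖b - a‖ * ‖X‖ = ‖b * (X - a * Y + l) - a * (X - b * Y + l') + (a * l' - b * l)‖ := by
        rw [← hX, norm_mul]
    _ ≤ ‖b * (X - a * Y + l)‖ + ‖a * (X - b * Y + l')‖ + ‖a * l' - b * l‖ :=
        norm_sub_add_le _ _ _
    _ = _ := by rw [norm_mul, norm_mul]; ring

lemma norm_sub_mul_norm_le_of_eliminate_X :
    ‖b - a‖ * ‖Y‖ ≤ ‖X - b * Y + l'‖ + ‖X - a * Y + l‖ + ‖l' - l‖ := by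
  have hY : (b - a) * Y = (X - a * Y + l) - (X - b * Y + l') + (l' - l) := by ring
  calc ‖b - a‖ * ‖Y‖ = ‖(X - a * Y + l) - (X - b * Y + l') + (l' - l)‖ := by
        rw [← hY, norm_mul]
    _ ≤ ‖X - a * Y + l‖ + ‖X - b * Y + l'‖ + ‖l' - l‖ := norm_sub_add_le _ _ _
    _ = _ := by ring

lemma norm_sub_mul_min_mul_max_le (ha : a ≠ 0) :
    ‖b - a‖ * min 1 (1 / ‖a‖) * max ‖X‖ ‖Y‖ ≤
      ‖X - b * Y + l'‖ + max 1 (‖b‖ / ‖a‖) * ‖X - a * Y + l‖ +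
        max ‖l' - l‖ (‖a * l' - b * l‖ / ‖a‖) := by
  have ha' : 0 < ‖a‖ := norm_pos_iff.mpr ha
  rcases le_total ‖X‖ ‖Y‖ with h | h
  · rw [max_eq_right h]
    calc ‖b - a‖ * min 1 (1 / ‖a‖) * ‖Y‖ ≤ ‖b - a‖ * 1 * ‖Y‖ := by gcongr; exact min_le_left _ _
      _ ≤ ‖X - b * Y + l'‖ + ‖X - a * Y + l‖ + ‖l' - l‖ := by
        rw [mul_one]; exact norm_sub_mul_norm_le_of_eliminate_X X Y a b l l'
      _ ≤ _ := by
        gcongr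
        · exact le_mul_of_one_le_left (norm_nonneg _) (le_max_left _ _)
        · exact le_max_left _ _
  · rw [max_eq_left h]
    calc ‖b - a‖ * min 1 (1 / ‖a‖) * ‖X‖ ≤ ‖b - a‖ * (1 / ‖a‖) * ‖X‖ := by
          gcongr; exact min_le_right _ _
      _ ≤ (‖a‖ * ‖X - b * Y + l'‖ + ‖b‖ * ‖X - a * Y + l‖ + ‖a * l' - b * l‖) / ‖a‖ := by
        rw [mul_one_div, div_mul_eq_mul_div]
        gcongr
        exact norm_sub_mul_norm_le_of_eliminate_Y X Y a b l l'
      _ = ‖X - b * Y + l'‖ + ‖b‖ / ‖a‖ * ‖X - a * Y + l‖ + ‖a * l' - b * l‖ / ‖a‖ := by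
        field_simp
      _ ≤ _ := by
        gcongr
        · exact le_max_right _ _
        · exact le_max_right _ _

end Elimination

theorem stmt1_general (n k : ℕ)
    (α lam : Fin n → ℂ) (hα0 : ∀ j, α j ≠ 0)
    (c0 : ℝ) (hc0 : 0 < c0)
    (X Y : ℂ) (Z : ℝ) (hZ : Z = max (‖X‖) (‖Y‖)) (hZpos : 0 < Z)
    (β : Fin n → ℂ) (hβ : ∀ j, β j = X - α j * Y + lam j)
    (hprod : ∏ j, ‖β j‖ ≤ c0 * Z ^ k)
    (i : Fin n)
    (hmin : ‖β i‖
      = (univ : Finset (Fin n)).inf' ⟨i, mem_univ i⟩ (fun j => ‖β j‖))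
    (c1 c2 c3 : Fin n → ℝ)
    (hc1 : ∀ j, c1 j = ‖α j - α i‖ * min 1 (1 / ‖α i‖))
    (hc2 : ∀ j, c2 j = c0 ^ ((1 : ℝ) / n) * max 1 (‖α j‖ / ‖α i‖))
    (hc3 : ∀ j, c3 j = max (‖lam j - lam i‖)
      (‖α i * lam j - α j * lam i‖ / ‖α i‖)) :
    ∀ j, j ≠ i →
      ‖β j‖ ≥ c1 j * Z - c2 j * Z ^ ((k : ℝ) / (n : ℝ)) - c3 j := by
  rintro j -
  have hpow : ‖β i‖ ^ n ≤ c0 * Z ^ k := by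
    simpa only [← hmin, card_univ, Fintype.card_fin] using
      (univ.inf'_pow_card_le_prod ⟨i, mem_univ i⟩ (fun j => ‖β j‖) fun _ _ => norm_nonneg _).trans
        hprod
  have hβi : ‖β i‖ ≤ c0 ^ ((1 : ℝ) / n) * Z ^ ((k : ℝ) / n) :=
    le_rpow_mul_rpow_of_pow_le_mul_pow (norm_nonneg _) hc0.le hZpos.le i.pos.ne' hpow
  have hmain := norm_sub_mul_min_mul_max_le X Y (α i) (α j) (lam i) (lam j) (hα0 i)
  rw [← hc1, ← hZ, ← hβ, ← hβ, ← hc3] at hmain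
  have hc2β : max 1 (‖α j‖ / ‖α i‖) * ‖β i‖ ≤ c2 j * Z ^ ((k : ℝ) / n) := by
    calc _ ≤ max 1 (‖α j‖ / ‖α i‖) * (c0 ^ ((1 : ℝ) / n) * Z ^ ((k : ℝ) / n)) := by
          gcongr
      _ = c2 j * Z ^ ((k : ℝ) / n) := by rw [hc2]; ring
  linarith

/-- Estimate (14) of the paper: `|βⱼ| ≥ c₁ᵢⱼ Z − c₂ᵢⱼ Z^(k/n) − c₃ᵢⱼ` for all `j ≠ i`. -/
theorem stmt1 (n k : ℕ) (hn : 2 ≤ n) (hk : k < n)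
    (α lam : Fin n → ℂ) (hα0 : ∀ j, α j ≠ 0) (hαinj : Function.Injective α)
    (c0 : ℝ) (hc0 : 0 < c0)
    (X Y : ℂ) (Z : ℝ) (hZ : Z = max (‖X‖) (‖Y‖)) (hZpos : 0 < Z)
    (β : Fin n → ℂ) (hβ : ∀ j, β j = X - α j * Y + lam j)
    (hprod : ∏ j, ‖β j‖ ≤ c0 * Z ^ k)
    (i : Fin n)
    (hmin : ‖β i‖
      = (univ : Finset (Fin n)).inf' ⟨i, mem_univ i⟩ (fun j => ‖β j‖))
    (c1 c2 c3 : Fin n → ℝ)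
    (hc1 : ∀ j, c1 j = ‖α j - α i‖ * min 1 (1 / ‖α i‖))
    (hc2 : ∀ j, c2 j = c0 ^ ((1 : ℝ) / n) * max 1 (‖α j‖ / ‖α i‖))
    (hc3 : ∀ j, c3 j = max (‖lam j - lam i‖)
      (‖α i * lam j - α j * lam i‖ / ‖α i‖)) :
    ∀ j, j ≠ i →
      ‖β j‖ ≥ c1 j * Z - c2 j * Z ^ ((k : ℝ) / (n : ℝ)) - c3 j :=
  stmt1_general n k α lam hα0 c0 hc0 X Y Z hZ hZpos β hβ hprod i hmin c1 c2 c3 hc1 hc2 hc3
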